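/- Let Ω ⊂ ℂ be a bounded, open, simply connected domain, φ : 𝔻 → Ω a conformal mapping, and ρ a density on Ω. Let Φ(u) = u·log(u + e), which is a strictly increasing bijection of [0,∞) onto [0,∞) with inverse Φ⁻¹. If K_Φ := ‖ρ·(J_φ∘φ⁻¹)/Φ⁻¹(J_φ∘φ⁻¹)‖_{L^Φ(Ω)} < ∞ (where (J_φ∘φ⁻¹)(x) = |φ'(φ⁻¹(x))|², so the expression equals ρ/(J_{φ⁻¹}·Φ⁻¹(1/J_{φ⁻¹}))), then ‖J_φ·(ρ∘φ)‖_{L^Φ(𝔻)} ≤ 3·K_Φ, where J_φ(y)·(ρ∘φ)(y) = |φ'(y)|²·ρ(φ(y)). -/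

import Mathlib

/-!
Write `J = |φ'|² = Φ(s)` with `s = Φ⁻¹(J)`, and put `L = log(s + e)`, `u = a L`, `B = log(u + e)`.
Since `s u / 3 + e ≤ (s + e)(u + e)` and `L + B ≤ 3 L B` for `L, B ≥ 1`, one gets `Φ(Φ(s) a / 3) ≤ Φ(s) Φ(a log(s + e))`; with `a = ρ/λ`
this bounds the modular integrand of `J·(ρ∘φ)` at level `3λ` by `J` times the integrand of `K_Φ`
at level `λ`, evaluated at `φ(y)`. The change of variables `x = φ(y)`, whose real Jacobian is
`|φ'|²`, turns the latter into the modular of `K_Φ`, so every admissible `λ` for `K_Φ` makes `3λ`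
admissible for the pulled back weight.
-/

open MeasureTheory Metric Set
open scoped ENNReal NNReal Real

/-- The Luxemburg norm `‖g‖_{L^N(E)} = inf{λ > 0 : ∫_E N(|g|/λ) dx ≤ 1}`. -/
noncomputable def luxemburgNorm (N : ℝ → ℝ) (E : Set ℂ) (g : ℂ → ℝ) : ℝ :=
  sInf {l : ℝ | 0 < l ∧ ∫⁻ x in E, ENNReal.ofReal (N (|g x| / l)) ≤ 1}

/-- The Young function `Φ(u) = u·log(u + e)`. -/
noncomputable def Phifun (u : ℝ) : ℝ := u * Real.log (u + Real.exp 1)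

theorem luxemburgNorm_le_mul_of_forall_admissible {N : ℝ → ℝ} {E F : Set ℂ} {g h : ℂ → ℝ}
    {c : ℝ} (hc : 0 < c)
    (hne : {l : ℝ | 0 < l ∧ ∫⁻ x in E, ENNReal.ofReal (N (|g x| / l)) ≤ 1}.Nonempty)
    (hadm : ∀ l, 0 < l → ∫⁻ x in E, ENNReal.ofReal (N (|g x| / l)) ≤ 1 →
      ∫⁻ y in F, ENNReal.ofReal (N (|h y| / (c * l))) ≤ 1) :
    luxemburgNorm N F h ≤ c * luxemburgNorm N E g := by
  rw [← div_le_iff₀' hc]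
  refine le_csInf hne fun l ⟨hl, hint⟩ => ?_
  rw [div_le_iff₀' hc]
  exact csInf_le ⟨0, fun _ hx => hx.1.le⟩ ⟨mul_pos hc hl, hadm l hl hint⟩

theorem det_restrictScalars_toSpanSingleton (c : ℂ) :
    ((ContinuousLinearMap.toSpanSingleton ℂ c).restrictScalars ℝ).det = ‖c‖ ^ 2 := by
  simp [ContinuousLinearMap.det, LinearMap.det_restrictScalars, Algebra.norm_complex_eq,
    Complex.normSq_eq_norm_sq]

theorem lintegral_image_eq_lintegral_norm_deriv_sq_mul {s : Set ℂ} {φ φ' : ℂ → ℂ}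
    (hs : MeasurableSet s) (hφ : ∀ y ∈ s, HasDerivWithinAt φ (φ' y) s y) (hinj : InjOn φ s)
    (f : ℂ → ℝ≥0∞) :
    ∫⁻ x in φ '' s, f x = ∫⁻ y in s, ENNReal.ofReal (‖φ' y‖ ^ 2) * f (φ y) := by
  rw [lintegral_image_eq_lintegral_abs_det_fderiv_mul volume hs
    (fun y hy => ((hφ y hy).hasFDerivWithinAt.restrictScalars ℝ)) hinj f]
  simp only [det_restrictScalars_toSpanSingleton, abs_pow, abs_norm]

theorem one_le_log_add_exp_one {u : ℝ} (hu : 0 ≤ u) : 1 ≤ Real.log (u + Real.exp 1) := by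
  rw [Real.le_log_iff_exp_le (by positivity)]
  linarith

@[simp]
theorem Phifun_zero : Phifun 0 = 0 := by
  simp [Phifun]

theorem le_Phifun {u : ℝ} (hu : 0 ≤ u) : u ≤ Phifun u :=
  le_mul_of_one_le_right hu (one_le_log_add_exp_one hu)

theorem continuousOn_Phifun : ContinuousOn Phifun (Ici 0) := fun _ hu =>
  (continuousAt_id.mul ((continuousAt_id.add continuousAt_const).log
    (add_pos_of_nonneg_of_pos hu (Real.exp_pos 1)).ne')).continuousWithinAt

theorem exists_nonneg_Phifun_eq {J : ℝ} (hJ : 0 ≤ J) : ∃ u, 0 ≤ u ∧ Phifun u = J := by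
  obtain ⟨u, hu, rfl⟩ := intermediate_value_Icc hJ (continuousOn_Phifun.mono Icc_subset_Ici_self)
    ⟨Phifun_zero.symm ▸ hJ, le_Phifun hJ⟩
  exact ⟨u, hu.1, rfl⟩

theorem nonneg_of_leftInverse_Phifun {Φinv : ℝ → ℝ}
    (hleft : ∀ u : ℝ, 0 ≤ u → Φinv (Phifun u) = u) {J : ℝ} (hJ : 0 ≤ J) : 0 ≤ Φinv J := by
  obtain ⟨u, hu, rfl⟩ := exists_nonneg_Phifun_eq hJ
  rwa [hleft u hu]

theorem Phifun_mul_div_three_le {s a : ℝ} (hs : 0 ≤ s) (ha : 0 ≤ a) :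
    Phifun (Phifun s * a / 3) ≤ Phifun s * Phifun (a * Real.log (s + Real.exp 1)) := by
  set L := Real.log (s + Real.exp 1)
  set u := a * L
  set B := Real.log (u + Real.exp 1)
  have hL : 1 ≤ L := one_le_log_add_exp_one hs
  have hu : 0 ≤ u := mul_nonneg ha (by linarith)
  have hB : 1 ≤ B := one_le_log_add_exp_one hu
  have he : 1 ≤ Real.exp 1 := Real.one_le_exp zero_le_one
  have hlog : Real.log (s * u / 3 + Real.exp 1) ≤ L + B := by
    rw [← Real.log_mul (by positivity) (by positivity)]
    exact Real.log_le_log (by positivity)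
      (by nlinarith [mul_nonneg hs hu, mul_nonneg (add_nonneg hs hu) (zero_le_one.trans he)])
  calc Phifun (Phifun s * a / 3) = s * u / 3 * Real.log (s * u / 3 + Real.exp 1) := by
        simp only [Phifun, u, L]; ring_nf
    _ ≤ s * u / 3 * (L + B) := by gcongr
    _ ≤ s * u / 3 * (3 * L * B) := by gcongr; nlinarith
    _ = Phifun s * Phifun u := by simp only [Phifun, u, L, B]; ring

theorem Phifun_abs_mul_div_three_le {Φinv : ℝ → ℝ}
    (hleft : ∀ u : ℝ, 0 ≤ u → Φinv (Phifun u) = u)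
    (hright : ∀ u : ℝ, 0 ≤ u → Phifun (Φinv u) = u)
    {J r l : ℝ} (hJ : 0 ≤ J) (hr : 0 ≤ r) (hl : 0 ≤ l) :
    Phifun (|J * r| / (3 * l)) ≤ J * Phifun (|r * J / Φinv J| / l) := by
  set s := Φinv J
  have hs : 0 ≤ s := nonneg_of_leftInverse_Phifun hleft hJ
  have hJs : J = s * Real.log (s + Real.exp 1) := (hright J hJ).symm
  rcases hs.eq_or_lt with hs0 | hs0
  · -- `s = 0` forces `J = 0`, and both sides vanish (with `x / 0 = 0` on the right)
    simp [hJs, ← hs0]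
  have hpull : |J * r| / (3 * l) = Phifun s * (r / l) / 3 := by
    rw [abs_of_nonneg (by positivity), hright J hJ]; ring
  have hpush : |r * J / s| / l = r / l * Real.log (s + Real.exp 1) := by
    rw [abs_of_nonneg (by positivity), hJs]; field_simp
  rw [hpull, hpush, ← hright J hJ]
  exact Phifun_mul_div_three_le hs (by positivity)

theorem luxemburg_pullback_weight_bound_general
    (Ω : Set ℂ)
    (φ φinv : ℂ → ℂ)
    (hφdiff : DifferentiableOn ℂ φ (ball (0:ℂ) 1))
    (hφbij : Set.BijOn φ (ball (0:ℂ) 1) Ω)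
    (hφinv : Set.InvOn φinv φ (ball (0:ℂ) 1) Ω)
    (ρ : ℂ → ℝ) (hρpos : ∀ x ∈ Ω, 0 < ρ x)
    (Φinv : ℝ → ℝ)
    (hΦinv_left : ∀ u : ℝ, 0 ≤ u → Φinv (Phifun u) = u)
    (hΦinv_right : ∀ u : ℝ, 0 ≤ u → Phifun (Φinv u) = u)
    (KΦ : ℝ)
    (hKΦdef : KΦ = luxemburgNorm Phifun Ω
      (fun x => ρ x * ‖deriv φ (φinv x)‖ ^ 2 / Φinv (‖deriv φ (φinv x)‖ ^ 2)))
    (hKΦfin : {l : ℝ | 0 < l ∧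
      ∫⁻ x in Ω, ENNReal.ofReal (Phifun
        (|ρ x * ‖deriv φ (φinv x)‖ ^ 2 / Φinv (‖deriv φ (φinv x)‖ ^ 2)| / l)) ≤ 1}.Nonempty) :
    luxemburgNorm Phifun (ball (0:ℂ) 1) (fun y => ‖deriv φ y‖ ^ 2 * ρ (φ y)) ≤
      3 * KΦ := by
  have hderiv : ∀ y ∈ ball (0:ℂ) 1, HasDerivWithinAt φ (deriv φ y) (ball 0 1) y := fun y hy =>
    (hφdiff.differentiableAt (isOpen_ball.mem_nhds hy)).hasDerivAt.hasDerivWithinAt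
  rw [hKΦdef]
  refine luxemburgNorm_le_mul_of_forall_admissible three_pos hKΦfin fun l hl hint => ?_
  calc ∫⁻ y in ball (0:ℂ) 1, ENNReal.ofReal (Phifun (|‖deriv φ y‖ ^ 2 * ρ (φ y)| / (3 * l)))
      ≤ ∫⁻ y in ball (0:ℂ) 1, ENNReal.ofReal (‖deriv φ y‖ ^ 2) * ENNReal.ofReal (Phifun
          (|ρ (φ y) * ‖deriv φ (φinv (φ y))‖ ^ 2 / Φinv (‖deriv φ (φinv (φ y))‖ ^ 2)| / l)) := by
        refine setLIntegral_mono' measurableSet_ball fun y hy => ?_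
        rw [hφinv.1 hy, ← ENNReal.ofReal_mul (sq_nonneg _)]
        exact ENNReal.ofReal_le_ofReal (Phifun_abs_mul_div_three_le hΦinv_left hΦinv_right
          (sq_nonneg _) (hρpos _ (hφbij.mapsTo hy)).le hl.le)
    _ = ∫⁻ x in Ω, ENNReal.ofReal (Phifun
          (|ρ x * ‖deriv φ (φinv x)‖ ^ 2 / Φinv (‖deriv φ (φinv x)‖ ^ 2)| / l)) := by
        rw [← hφbij.image_eq, lintegral_image_eq_lintegral_norm_deriv_sq_mul measurableSet_ball
          hderiv hφbij.injOn]
    _ ≤ 1 := hint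

/-- If `K_Φ := ‖ρ·(J_φ∘φ⁻¹)/Φ⁻¹(J_φ∘φ⁻¹)‖_{L^Φ(Ω)} < ∞`, then the pulled
back weight satisfies `‖J_φ·(ρ∘φ)‖_{L^Φ(𝔻)} ≤ 3·K_Φ`. -/
theorem luxemburg_pullback_weight_bound
    (Ω : Set ℂ) (hΩopen : IsOpen Ω) (hΩbdd : Bornology.IsBounded Ω)
    (hΩsc : SimplyConnectedSpace Ω)
    (φ φinv : ℂ → ℂ)
    (hφdiff : DifferentiableOn ℂ φ (ball (0:ℂ) 1))
    (hφderiv : ∀ y ∈ ball (0:ℂ) 1, deriv φ y ≠ 0)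
    (hφbij : Set.BijOn φ (ball (0:ℂ) 1) Ω)
    (hφinv : Set.InvOn φinv φ (ball (0:ℂ) 1) Ω)
    (ρ : ℂ → ℝ) (hρcont : ContinuousOn ρ Ω) (hρpos : ∀ x ∈ Ω, 0 < ρ x)
    (hρint : IntegrableOn ρ Ω)
    (Φinv : ℝ → ℝ)
    (hΦinv_left : ∀ u : ℝ, 0 ≤ u → Φinv (Phifun u) = u)
    (hΦinv_right : ∀ u : ℝ, 0 ≤ u → Phifun (Φinv u) = u)
    (KΦ : ℝ)
    (hKΦdef : KΦ = luxemburgNorm Phifun Ω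
      (fun x => ρ x * ‖deriv φ (φinv x)‖ ^ 2 / Φinv (‖deriv φ (φinv x)‖ ^ 2)))
    (hKΦfin : {l : ℝ | 0 < l ∧
      ∫⁻ x in Ω, ENNReal.ofReal (Phifun
        (|ρ x * ‖deriv φ (φinv x)‖ ^ 2 / Φinv (‖deriv φ (φinv x)‖ ^ 2)| / l)) ≤ 1}.Nonempty) :
    luxemburgNorm Phifun (ball (0:ℂ) 1) (fun y => ‖deriv φ y‖ ^ 2 * ρ (φ y)) ≤
      3 * KΦ :=
  luxemburg_pullback_weight_bound_general Ω φ φinv hφdiff hφbij hφinv ρ hρpos Φinv hΦinv_left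
    hΦinv_right KΦ hKΦdef hKΦfin
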